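/- arXiv:1211.1999 — 2 statements merged into one kernel-verified Lean document; each statement's English description precedes it below -/
import Mathlib

section
/- Let G be a minimal counterexample to Ohba's Conjecture with bad list assignment L, let C = ⋃_v L(v), and let B be the bipartite graph on (V(G), C) with v adjacent to each colour in L(v). Then B contains a matching saturating C. -/
/-- `f` is an acceptable colouring for the list assignment `L` on `G`:
it is proper and each vertex gets a colour from its list. -/
def IsListColoring {V : Type} (G : SimpleGraph V) (L : V → Finset ℕ) (f : V → ℕ) : Prop :=
  (∀ v, f v ∈ L v) ∧ ∀ ⦃u w : V⦄, G.Adj u w → f u ≠ f w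

/-- `G` is `L`-colourable. -/
def ListColorable {V : Type} (G : SimpleGraph V) (L : V → Finset ℕ) : Prop :=
  ∃ f, IsListColoring G L f

/-- `G` is `k`-choosable: `L`-colourable whenever every list has size at least `k`. -/
def Choosable {V : Type} (G : SimpleGraph V) (k : ℕ) : Prop :=
  ∀ L : V → Finset ℕ, (∀ v, k ≤ (L v).card) → ListColorable G L

/-- The list chromatic number of `G`. -/
noncomputable def listChromaticNumber {V : Type} (G : SimpleGraph V) : ℕ :=
  sInf {k | Choosable G k}

open Finset
open scoped Classical

/-- The set `C` of all colours appearing in some list. -/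
noncomputable def colorSet {V : Type} [Fintype V] (L : V → Finset ℕ) : Finset ℕ :=
  Finset.univ.biUnion L

/-- `N_B(c)`: the set of vertices whose list contains the colour `c`. -/
noncomputable def NB {V : Type} [Fintype V] (L : V → Finset ℕ) (c : ℕ) : Finset V :=
  Finset.univ.filter (fun v => c ∈ L v)

/-- `γ = |V(G)| - |C|`. -/
noncomputable def gam (V : Type) [Fintype V] (L : V → Finset ℕ) : ℕ :=
  Fintype.card V - (colorSet L).card

/-- The part (maximal stable set) of the complete multipartite graph with index `i`. -/
noncomputable def part {V : Type} [Fintype V] {k : ℕ} (p : V → Fin k) (i : Fin k) : Finset V :=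
  Finset.univ.filter (fun v => p v = i)

/-- `v` is a singleton: the part containing `v` has exactly one element. -/
def IsSingleton {V : Type} [Fintype V] {k : ℕ} (p : V → Fin k) (v : V) : Prop :=
  (part p (p v)).card = 1

/-- `b`: the number of non-singleton parts. -/
noncomputable def numBigParts {V : Type} [Fintype V] {k : ℕ} (p : V → Fin k) : ℕ :=
  (Finset.univ.filter (fun i : Fin k => 2 ≤ (part p i).card)).card

/-- A colour is globally frequent if it appears in the lists of at least `k+1` vertices. -/
def GloballyFrequent {V : Type} [Fintype V] (L : V → Finset ℕ) (k : ℕ) (c : ℕ) : Prop :=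
  k + 1 ≤ (NB L c).card

/-- A colour is frequent among singletons if it appears in the lists of at least `γ`
singletons. -/
def FrequentAmongSingletons {V : Type} [Fintype V] {k : ℕ} (p : V → Fin k)
    (L : V → Finset ℕ) (c : ℕ) : Prop :=
  gam V L ≤ (Finset.univ.filter (fun v => IsSingleton p v ∧ c ∈ L v)).card

/-- A colour is frequent if it is globally frequent or frequent among singletons. -/
def Frequent {V : Type} [Fintype V] {k : ℕ} (p : V → Fin k) (L : V → Finset ℕ) (c : ℕ) : Prop :=
  GloballyFrequent L k c ∨ FrequentAmongSingletons p L c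

/-- A proper colouring `f : V → C` is near-acceptable for `L` if every vertex `v` satisfies
`f v ∈ L v`, or `f v` is frequent and `v` is the unique vertex coloured `f v`. -/
def NearAcceptable {V : Type} [Fintype V] {k : ℕ} (G : SimpleGraph V) (p : V → Fin k)
    (L : V → Finset ℕ) (f : V → ℕ) : Prop :=
  (∀ v, f v ∈ colorSet L) ∧ (∀ ⦃u w : V⦄, G.Adj u w → f u ≠ f w) ∧
    ∀ v, f v ∈ L v ∨ (Frequent p L (f v) ∧ ∀ u, f u = f v → u = v)

/-- `L` is a maximal bad list assignment: adding any colour of `C` to any list makes `G`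
colourable. -/
def MaximalBad {V : Type} [Fintype V] (G : SimpleGraph V) (L : V → Finset ℕ) : Prop :=
  ∀ v c, c ∈ colorSet L → c ∉ L v →
    ListColorable G (Function.update L v (insert c (L v)))

/-- A minimal counterexample to Ohba's conjecture: `G` is a complete `k`-partite graph
(with part-indexing map `p`) on at most `2k+1` vertices, `L` is a list assignment with all
lists of size at least `k` for which `G` is not `L`-colourable (so `χ_ℓ(G) > k = χ(G)`),
and every graph on fewer vertices satisfies Ohba's conjecture. -/
structure MinCex (V : Type) [Fintype V] (G : SimpleGraph V) (k : ℕ)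
    (p : V → Fin k) (L : V → Finset ℕ) : Prop where
  adj_iff : ∀ u v, G.Adj u v ↔ p u ≠ p v
  surj : Function.Surjective p
  card_le : Fintype.card V ≤ 2 * k + 1
  lists : ∀ v, k ≤ (L v).card
  bad : ¬ ListColorable G L
  minimal : ∀ (W : Type) [Fintype W] (H : SimpleGraph W) (j : ℕ),
    Fintype.card W < Fintype.card V → H.chromaticNumber = (j : ℕ∞) →
    Fintype.card W ≤ 2 * j + 1 → listChromaticNumber H = j

/-! If Hall's condition failed for the colours, a set `A` of colours of maximum deficiency would
have its neighbourhood `D = N(A)` matchable into `A`, again by Hall's theorem. Colouring `D` along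
this matching uses colours that lie in no list outside `D`, so `D` can be set aside; after
precolouring a few more vertices, what is left is a smaller complete multipartite graph within
Ohba's bound, which is colourable by minimality, so `G` would be `L`-colourable. -/

namespace Finset

variable {ι α : Type*} [DecidableEq α]

theorem exists_injOn_of_forall_card_le_card_biUnion [Nonempty α] {S : Finset ι}
    {t : ι → Finset α} (h : ∀ s ⊆ S, #s ≤ #(s.biUnion t)) :
    ∃ f : ι → α, Set.InjOn f S ∧ ∀ i ∈ S, f i ∈ t i := by
  classical
  obtain ⟨f, hinj, hf⟩ := (all_card_le_biUnion_card_iff_exists_injective fun i : S => t i).1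
    fun s => by
      simpa [card_image_of_injective _ Subtype.val_injective, image_biUnion] using
        h (s.image Subtype.val) fun i hi => by obtain ⟨j, -, rfl⟩ := mem_image.1 hi; exact j.2
  refine ⟨fun i => if hi : i ∈ S then f ⟨i, hi⟩ else Classical.arbitrary α, ?_, ?_⟩
  · intro i hi j hj hij
    rw [mem_coe] at hi hj
    simp only [dif_pos hi, dif_pos hj] at hij
    exact congrArg Subtype.val (hinj hij)
  · intro i hi
    simpa [dif_pos hi] using hf ⟨i, hi⟩

theorem exists_injOn_of_card_le_card [Nonempty α] {S : Finset ι} {t : ι → Finset α}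
    (h : ∀ i ∈ S, #S ≤ #(t i)) : ∃ f : ι → α, Set.InjOn f S ∧ ∀ i ∈ S, f i ∈ t i := by
  refine exists_injOn_of_forall_card_le_card_biUnion fun s hs => ?_
  obtain rfl | ⟨i, hi⟩ := s.eq_empty_or_nonempty
  · simp
  · calc #s ≤ #S := card_le_card hs
      _ ≤ #(t i) := h i (hs hi)
      _ ≤ #(s.biUnion t) := card_le_card (subset_biUnion_of_mem t hi)

theorem exists_subset_card_eq_image_sdiff_eq {β : Type*} [DecidableEq β] (p : α → β)
    {Y : Finset α} {t : ℕ} (ht : t + #(Y.image p) ≤ #Y) :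
    ∃ Q ⊆ Y, #Q = t ∧ (Y \ Q).image p = Y.image p := by
  have hrep : ∀ i ∈ Y.image p, ∃ v ∈ Y, p v = i := fun i hi => by simpa using hi
  choose σ hσY hσp using hrep
  set R := (Y.image p).attach.image fun i => σ i.1 i.2
  have hRY : R ⊆ Y := fun v hv => by obtain ⟨i, -, rfl⟩ := mem_image.1 hv; exact hσY _ _
  have hRcard : #R ≤ #(Y.image p) := card_image_le.trans (card_attach).le
  obtain ⟨Q, hQ, hQcard⟩ := exists_subset_card_eq (s := Y \ R) (n := t)
    (by rw [card_sdiff_of_subset hRY]; omega)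
  refine ⟨Q, hQ.trans sdiff_subset, hQcard, (image_subset_image sdiff_subset).antisymm ?_⟩
  intro i hi
  refine mem_image.2 ⟨σ i hi, mem_sdiff.2 ⟨hσY i hi, fun hQσ => ?_⟩, hσp i hi⟩
  exact (mem_sdiff.1 (hQ hQσ)).2 (mem_image.2 ⟨⟨i, hi⟩, mem_attach _ _, rfl⟩)

end Finset

open Finset

@[simp]
theorem mem_NB {V : Type} [Fintype V] {L : V → Finset ℕ} {c : ℕ} {v : V} :
    v ∈ NB L c ↔ c ∈ L v := by
  simp [NB]

theorem mem_colorSet {V : Type} [Fintype V] {L : V → Finset ℕ} {c : ℕ} :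
    c ∈ colorSet L ↔ ∃ v, c ∈ L v := by
  simp [colorSet]

/-- If `s ⊆ N(A)` violated Hall's condition for the lists `L v ∩ A`, removing from `A` the colours
of these lists would increase the deficiency `|A| - |N(A)|`. -/
theorem exists_injOn_of_forall_deficiency_le {V : Type} [Fintype V] (L : V → Finset ℕ)
    {A : Finset ℕ}
    (hA : ∀ A' ⊆ A, (#A' : ℤ) - #(A'.biUnion (NB L)) ≤ #A - #(A.biUnion (NB L))) :
    ∃ g : V → ℕ, Set.InjOn g ↑(A.biUnion (NB L)) ∧ ∀ v ∈ A.biUnion (NB L), g v ∈ L v ∩ A := by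
  refine exists_injOn_of_forall_card_le_card_biUnion fun s hs => ?_
  set U := s.biUnion fun v => L v ∩ A
  have hUA : U ⊆ A := by simp [U, subset_iff]
  have hN : (A \ U).biUnion (NB L) ⊆ A.biUnion (NB L) \ s := by
    intro v hv
    simp only [mem_biUnion, mem_sdiff, mem_NB, U, mem_inter, not_exists, not_and] at hv ⊢
    obtain ⟨c, ⟨hcA, hcU⟩, hcv⟩ := hv
    exact ⟨⟨c, hcA, hcv⟩, fun hvs => hcU v hvs hcv hcA⟩
  have h1 := card_le_card hN
  have h2 := hA (A \ U) sdiff_subset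
  rw [card_sdiff_of_subset hs] at h1
  rw [card_sdiff_of_subset hUA] at h2
  have := card_le_card hUA
  have := card_le_card hs
  omega

theorem SimpleGraph.chromaticNumber_eq_card_of_forall_adj_iff {W ι : Type*} [Fintype ι]
    {H : SimpleGraph W} (q : W → ι) (hq : Function.Surjective q)
    (hadj : ∀ u w, H.Adj u w ↔ q u ≠ q w) : H.chromaticNumber = Fintype.card ι := by
  obtain ⟨σ, hσ⟩ := hq.hasRightInverse
  refine le_antisymm ?_ ?_
  · simpa using chromaticNumber_mono_of_hom (G' := (⊤ : SimpleGraph ι))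
      ⟨q, fun huw => (hadj _ _).1 huw⟩
  · simpa using chromaticNumber_mono_of_hom (G := (⊤ : SimpleGraph ι)) (G' := H)
      ⟨σ, fun {i j} hij => (hadj _ _).2 (by simpa [hσ i, hσ j] using hij)⟩

theorem choosable_card {W : Type} [Fintype W] (H : SimpleGraph W) :
    Choosable H (Fintype.card W) := fun L hL => by
  obtain ⟨f, hinj, hf⟩ := exists_injOn_of_card_le_card (S := univ) (t := L) (by simpa using hL)
  exact ⟨f, fun v => hf v (mem_univ v),
    fun u w huw hfuw => H.ne_of_adj huw (hinj (mem_univ u) (mem_univ w) hfuw)⟩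

theorem choosable_listChromaticNumber {W : Type} [Fintype W] (H : SimpleGraph W) :
    Choosable H (listChromaticNumber H) :=
  Nat.sInf_mem (s := {n | Choosable H n}) ⟨_, choosable_card H⟩

theorem listColorable_of_injOn_induce_compl {V : Type} [Fintype V] {G : SimpleGraph V}
    {L : V → Finset ℕ} {X : Finset V} {f : V → ℕ} (hinj : Set.InjOn f X) (hf : ∀ v ∈ X, f v ∈ L v)
    (hrest : ListColorable (G.induce ↑Xᶜ) fun w => L w \ X.image f) : ListColorable G L := by
  obtain ⟨f', hf'L, hf'adj⟩ := hrest
  have hf'mem : ∀ w (hw : w ∉ X), f' ⟨w, by simpa using hw⟩ ∈ L w := fun w hw =>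
    (mem_sdiff.1 (hf'L _)).1
  have hf'new : ∀ w (hw : w ∉ X), ∀ v ∈ X, f' ⟨w, by simpa using hw⟩ ≠ f v := fun w hw v hv he =>
    (mem_sdiff.1 (hf'L _)).2 (mem_image.2 ⟨v, hv, he.symm⟩)
  refine ⟨fun v => if hv : v ∈ X then f v else f' ⟨v, by simpa using hv⟩, fun v => ?_, ?_⟩
  · by_cases hv : v ∈ X
    · simpa [dif_pos hv] using hf v hv
    · simpa [dif_neg hv] using hf'mem v hv
  · intro u w huw
    by_cases hu : u ∈ X <;> by_cases hw : w ∈ X <;> simp only [hu, hw, ↓reduceDIte]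
    · exact fun he => G.ne_of_adj huw (hinj hu hw he)
    · exact (hf'new w hw u hu).symm
    · exact hf'new u hu w hw
    · exact hf'adj (by simpa using huw)

namespace MinCex

variable {V : Type} [Fintype V] {G : SimpleGraph V} {k : ℕ} {p : V → Fin k} {L : V → Finset ℕ}

theorem nonempty (h : MinCex V G k p L) : Nonempty V := by
  by_contra hV
  rw [not_nonempty_iff] at hV
  exact h.bad ⟨fun _ => 0, fun v => isEmptyElim v, fun u => isEmptyElim u⟩

theorem choosable_induce (h : MinCex V G k p L) {Y : Finset V} (hlt : #Y < Fintype.card V)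
    (hle : #Y ≤ 2 * #(Y.image p) + 1) : Choosable (G.induce ↑Y) #(Y.image p) := by
  let q : ↥(Y : Set V) → Y.image p := fun w => ⟨p w, mem_image_of_mem p w.2⟩
  have hq : Function.Surjective q := fun i => by
    obtain ⟨v, hv, hvi⟩ := mem_image.1 i.2
    exact ⟨⟨v, hv⟩, Subtype.ext hvi⟩
  have hadj : ∀ u w, (G.induce ↑Y).Adj u w ↔ q u ≠ q w := fun u w => by
    simp [q, h.adj_iff]
  have hχ := SimpleGraph.chromaticNumber_eq_card_of_forall_adj_iff q hq hadj
  rw [Fintype.card_coe] at hχ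
  have hmin := h.minimal (↥(Y : Set V)) (G.induce ↑Y) #(Y.image p) (by simpa using hlt) hχ
    (by simpa using hle)
  simpa [hmin] using choosable_listChromaticNumber (G.induce ↑Y)

theorem listColorable_of_injOn (h : MinCex V G k p L) {X : Finset V} {f : V → ℕ}
    (hinj : Set.InjOn f X) (hf : ∀ v ∈ X, f v ∈ L v) (hlt : #Xᶜ < Fintype.card V)
    (hle : #Xᶜ ≤ 2 * #(Xᶜ.image p) + 1)
    (hlists : ∀ w ∉ X, #(Xᶜ.image p) ≤ #(L w \ X.image f)) : ListColorable G L :=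
  listColorable_of_injOn_induce_compl hinj hf
    (h.choosable_induce hlt hle _ fun w => hlists w (by simpa using w.2))

theorem le_card_add_card_image_compl (h : MinCex V G k p L) (D : Finset V) :
    k ≤ #D + #(Dᶜ.image p) :=
  calc k = #((D ∪ Dᶜ).image p) := by simp [image_univ_of_surjective h.surj]
    _ ≤ #(D.image p) + #(Dᶜ.image p) := by rw [image_union]; exact card_union_le _ _
    _ ≤ #D + #(Dᶜ.image p) := by gcongr; exact card_image_le

/-- Besides `D`, precolour `#Dᶜ - (2j + 1)` vertices `Q` outside `D` while keeping each of the `j`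
parts met by `Dᶜ` nonempty: the rest is complete `j`-partite on at most `2j + 1` vertices, and its
lists lose at most `#Q ≤ k - j` colours, so minimality colours it. -/
theorem listColorable_of_injOn_of_notMem (h : MinCex V G k p L) {D : Finset V} (hD : D.Nonempty)
    {g : V → ℕ} (hg_inj : Set.InjOn g D) (hg_mem : ∀ v ∈ D, g v ∈ L v)
    (hg_priv : ∀ v ∈ D, ∀ w ∉ D, g v ∉ L w) : ListColorable G L := by
  set j := #(Dᶜ.image p)
  have hkj := h.le_card_add_card_image_compl D
  have hn := h.card_le
  have hDc := card_compl D
  have hD1 := hD.card_pos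
  have hDn := card_le_univ D
  have hjD : j ≤ #Dᶜ := card_image_le
  have hjk : j ≤ k := by simpa using card_le_univ (Dᶜ.image p)
  obtain ⟨Q, hQD, hQcard, hQimage⟩ :=
    exists_subset_card_eq_image_sdiff_eq p (Y := Dᶜ) (t := #Dᶜ - (2 * j + 1)) (by omega)
  have hQD' : ∀ v ∈ Q, v ∉ D := fun v hv => mem_compl.1 (hQD hv)
  obtain ⟨c, hc_inj, hc_mem⟩ := exists_injOn_of_card_le_card (S := Q) (t := L)
    fun v _ => by have := h.lists v; omega
  have hY : (D ∪ Q)ᶜ = Dᶜ \ Q := by ext; simp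
  have hYimage : #((D ∪ Q)ᶜ.image p) = j := by rw [hY, hQimage]
  have hYcard : #(D ∪ Q)ᶜ = #Dᶜ - #Q := by rw [hY, card_sdiff_of_subset hQD]
  refine h.listColorable_of_injOn (X := D ∪ Q) (f := D.piecewise g c) ?_ ?_ (by omega)
    (by rw [hYimage]; omega) fun w hw => ?_
  · rw [coe_union, Set.injOn_union (disjoint_coe.2 (disjoint_right.2 hQD'))]
    refine ⟨hg_inj.congr fun v hv => (D.piecewise_eq_of_mem g c hv).symm,
      hc_inj.congr fun v hv => (D.piecewise_eq_of_notMem g c (hQD' v hv)).symm,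
      fun u hu w hw he => hg_priv u hu w (hQD' w hw) ?_⟩
    rw [D.piecewise_eq_of_mem g c hu, D.piecewise_eq_of_notMem g c (hQD' w hw)] at he
    exact he ▸ hc_mem w hw
  · intro v hv
    by_cases hvD : v ∈ D
    · simpa [hvD] using hg_mem v hvD
    · simpa [hvD] using hc_mem v ((mem_union.1 hv).resolve_left hvD)
  · rw [mem_union, not_or] at hw
    have hsub : L w \ Q.image c ⊆ L w \ (D ∪ Q).image (D.piecewise g c) := by
      intro x hx
      simp only [mem_sdiff, mem_image, mem_union, not_exists, not_and] at hx ⊢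
      refine ⟨hx.1, fun v hv hvx => ?_⟩
      by_cases hvD : v ∈ D
      · rw [D.piecewise_eq_of_mem g c hvD] at hvx
        exact hg_priv v hvD w hw.1 (hvx ▸ hx.1)
      · rw [D.piecewise_eq_of_notMem g c hvD] at hvx
        exact hx.2 v (hv.resolve_left hvD) hvx
    have hLw := h.lists w
    have hcQ : #(Q.image c) ≤ #Q := card_image_le
    calc #((D ∪ Q)ᶜ.image p) = j := hYimage
      _ ≤ #(L w) - #(Q.image c) := by omega
      _ ≤ #(L w \ Q.image c) := le_card_sdiff _ _
      _ ≤ _ := card_le_card hsub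

theorem card_le_card_biUnion_NB (h : MinCex V G k p L) :
    ∀ S ⊆ colorSet L, #S ≤ #(S.biUnion (NB L)) := by
  by_contra! hS
  obtain ⟨S, hSC, hSlt⟩ := hS
  obtain ⟨A, hAC, hAmax⟩ := exists_max_image (colorSet L).powerset
    (fun A => (#A : ℤ) - #(A.biUnion (NB L))) ⟨∅, empty_mem_powerset _⟩
  rw [mem_powerset] at hAC
  have hdef := hAmax S (mem_powerset.2 hSC)
  obtain ⟨g, hg_inj, hg⟩ := exists_injOn_of_forall_deficiency_le L
    fun A' hA' => hAmax A' (mem_powerset.2 (hA'.trans hAC))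
  have hD : (A.biUnion (NB L)).Nonempty := by
    obtain ⟨c, hc⟩ : A.Nonempty := nonempty_iff_ne_empty.2 fun hA => by simp [hA] at hdef; omega
    obtain ⟨v, hv⟩ := mem_colorSet.1 (hAC hc)
    exact ⟨v, mem_biUnion.2 ⟨c, hc, mem_NB.2 hv⟩⟩
  exact h.bad <| h.listColorable_of_injOn_of_notMem hD hg_inj
    (fun v hv => (mem_inter.1 (hg v hv)).1)
    fun v hv w hw hgw => hw (mem_biUnion.2 ⟨g v, (mem_inter.1 (hg v hv)).2, mem_NB.2 hgw⟩)

end MinCex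

/-- In a minimal counterexample, the vertex-colour bipartite graph `B` has a matching
saturating `C`; equivalently there is an injection `h : C → V(G)` with `c ∈ L(h c)`. -/
theorem stmt_4 (V : Type) [Fintype V] (G : SimpleGraph V) (k : ℕ) (p : V → Fin k)
    (L : V → Finset ℕ) (h : MinCex V G k p L) :
    ∃ m : ℕ → V, Set.InjOn m ↑(colorSet L) ∧ ∀ c ∈ colorSet L, c ∈ L (m c) := by
  have := h.nonempty
  obtain ⟨m, hm_inj, hm⟩ := exists_injOn_of_forall_card_le_card_biUnion h.card_le_card_biUnion_NB
  exact ⟨m, hm_inj, fun c hc => mem_NB.1 (hm c hc)⟩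
end

section
/- A minimal counterexample G to Ohba's Conjecture with bad list assignment L satisfies |V(G)| = 2k+1 exactly. -/
open Finset
open scoped Classical

/-! Suppose `|V| ≤ 2k`. If some part `P` has a colour `c` common to all its lists and
`|V - P| ≤ 2(k-1)+1`, colour `P` with `c` and the complete `(k-1)`-partite graph `G - P` from the
lists minus `c`, which is possible since `G - P` is `(k-1)`-choosable by minimality. A singleton
part always qualifies, so every part has at least two, hence exactly two, vertices, and their
lists are disjoint; then Hall's condition holds and even an injective `L`-colouring exists. -/

section ListColoring

variable {V : Type}

lemma listColorable_of_forall_card_le_card_biUnion [Fintype V] (G : SimpleGraph V)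
    (L : V → Finset ℕ) (h : ∀ s : Finset V, #s ≤ #(s.biUnion L)) : ListColorable G L := by
  obtain ⟨f, hf, hmem⟩ := (Finset.all_card_le_biUnion_card_iff_exists_injective L).mp h
  exact ⟨f, hmem, fun u w huw he => G.ne_of_adj huw (hf he)⟩

lemma choosable_card_s7 [Fintype V] (G : SimpleGraph V) : Choosable G (Fintype.card V) := by
  refine fun L hL => listColorable_of_forall_card_le_card_biUnion G L fun s => ?_
  obtain rfl | ⟨v, hv⟩ := s.eq_empty_or_nonempty
  · simp
  calc #s ≤ Fintype.card V := card_le_univ s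
    _ ≤ #(L v) := hL v
    _ ≤ #(s.biUnion L) := card_le_card (subset_biUnion_of_mem L hv)

lemma choosable_listChromaticNumber_s7 [Fintype V] (G : SimpleGraph V) :
    Choosable G (listChromaticNumber G) :=
  Nat.sInf_mem (s := {n | Choosable G n}) ⟨_, choosable_card_s7 G⟩

lemma chromaticNumber_eq_of_adj_iff {m : ℕ} {G : SimpleGraph V} {p : V → Fin m}
    (hp : Function.Surjective p) (hadj : ∀ u v, G.Adj u v ↔ p u ≠ p v) :
    G.chromaticNumber = m := by
  let toTop : G →g (⊤ : SimpleGraph (Fin m)) := ⟨p, fun huv => (hadj _ _).mp huv⟩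
  let ofTop : (⊤ : SimpleGraph (Fin m)) →g G :=
    ⟨Function.surjInv hp, fun {i j} hij => (hadj _ _).mpr (by
      simpa only [Function.surjInv_eq hp] using (SimpleGraph.top_adj i j).mp hij)⟩
  have htop : (⊤ : SimpleGraph (Fin m)).chromaticNumber = m := by
    simp [SimpleGraph.chromaticNumber_top]
  exact le_antisymm (htop ▸ SimpleGraph.chromaticNumber_mono_of_hom toTop)
    (htop ▸ SimpleGraph.chromaticNumber_mono_of_hom ofTop)

lemma listColorable_of_induce_compl {G : SimpleGraph V} {L : V → Finset ℕ} {S : Set V}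
    {c : ℕ} (hS : G.IsIndepSet S) (hc : ∀ v ∈ S, c ∈ L v)
    (h : ListColorable (G.induce Sᶜ) fun w => (L w).erase c) : ListColorable G L := by
  classical
  obtain ⟨g, hgL, hgadj⟩ := h
  have hgc : ∀ w, g w ≠ c := fun w => ne_of_mem_erase (hgL w)
  refine ⟨fun v => if hv : v ∈ S then c else g ⟨v, hv⟩, fun v => ?_, fun u w huw => ?_⟩
  · by_cases hv : v ∈ S
    · simpa [hv] using hc v hv
    · simpa [hv] using mem_of_mem_erase (hgL ⟨v, hv⟩)
  · by_cases hu : u ∈ S <;> by_cases hw : w ∈ S <;> simp only [hu, hw, dite_true, dite_false]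
    · exact absurd huw (hS hu hw (G.ne_of_adj huw))
    · exact (hgc _).symm
    · exact hgc _
    · exact hgadj (SimpleGraph.induce_adj.mpr huw)

end ListColoring

section Parts

variable {V : Type} [Fintype V] {k : ℕ}

@[simp]
lemma mem_part {p : V → Fin k} {i : Fin k} {v : V} : v ∈ part p i ↔ p v = i := by
  simp [part]

lemma sum_card_part (p : V → Fin k) : ∑ i, #(part p i) = Fintype.card V :=
  (card_eq_sum_card_fiberwise fun v _ => mem_univ (p v)).symm

lemma card_part_eq_two {p : V → Fin k} (hge : ∀ i, 2 ≤ #(part p i))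
    (hV : Fintype.card V ≤ 2 * k) (i : Fin k) : #(part p i) = 2 := by
  by_contra hne
  have hlt : ∑ _j : Fin k, 2 < ∑ j, #(part p j) :=
    sum_lt_sum (fun j _ => hge j) ⟨i, mem_univ i, lt_of_le_of_ne (hge i) (Ne.symm hne)⟩
  simp only [sum_const, card_univ, Fintype.card_fin, smul_eq_mul, sum_card_part] at hlt
  omega

/-- Hall's condition: a set `s` of more than `k` vertices contains two vertices of one part, whose
disjoint lists already supply `2k ≥ |V|` colours. -/
lemma listColorable_of_disjoint_lists (G : SimpleGraph V) (p : V → Fin k) {L : V → Finset ℕ}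
    (hV : Fintype.card V ≤ 2 * k) (hL : ∀ v, k ≤ #(L v))
    (hdisj : ∀ u w, u ≠ w → p u = p w → Disjoint (L u) (L w)) : ListColorable G L := by
  refine listColorable_of_forall_card_le_card_biUnion G L fun s => ?_
  by_cases hs : #s ≤ k
  · obtain rfl | ⟨v, hv⟩ := s.eq_empty_or_nonempty
    · simp
    exact hs.trans ((hL v).trans (card_le_card (subset_biUnion_of_mem L hv)))
  obtain ⟨u, hu, w, hw, huw, hpuw⟩ := exists_ne_map_eq_of_card_lt_of_maps_to
    (t := (univ : Finset (Fin k))) (by simpa using not_le.mp hs) fun v _ => by simp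
  calc #s ≤ Fintype.card V := card_le_univ s
    _ ≤ #(L u) + #(L w) := by have := hL u; have := hL w; omega
    _ = #(L u ∪ L w) := (card_union_of_disjoint (hdisj u w huw hpuw)).symm
    _ ≤ #(s.biUnion L) :=
      card_le_card (union_subset (subset_biUnion_of_mem L hu) (subset_biUnion_of_mem L hw))

end Parts

namespace MinCex

variable {V : Type} [Fintype V] {G : SimpleGraph V} {k : ℕ} {p : V → Fin k} {L : V → Finset ℕ}

lemma pos (h : MinCex V G k p L) : 0 < k := by
  refine Nat.pos_of_ne_zero fun hk => h.bad ?_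
  subst hk
  exact ⟨fun _ => 0, fun v => (p v).elim0, fun u _ _ => (p u).elim0⟩

lemma choosable_of_card_lt (h : MinCex V G k p L) {W : Type} [Fintype W] {H : SimpleGraph W}
    {m : ℕ} {q : W → Fin m} (hq : Function.Surjective q) (hadj : ∀ u v, H.Adj u v ↔ q u ≠ q v)
    (hcard : Fintype.card W < Fintype.card V) (hW : Fintype.card W ≤ 2 * m + 1) :
    Choosable H m :=
  h.minimal W H m hcard (chromaticNumber_eq_of_adj_iff hq hadj) hW ▸
    choosable_listChromaticNumber_s7 H

lemma false_of_forall_mem_part {m : ℕ} {p : V → Fin (m + 1)} (h : MinCex V G (m + 1) p L)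
    {i : Fin (m + 1)} {c : ℕ} (hc : ∀ v, p v = i → c ∈ L v)
    (hcard : Fintype.card V - #(part p i) ≤ 2 * m + 1) : False := by
  set S : Set V := {v | p v = i}
  have hsucc : ∀ w : ↥Sᶜ, ∃ j, i.succAbove j = p w := fun w => Fin.exists_succAbove_eq w.2
  choose q hq using hsucc
  have hadj : ∀ u w, (G.induce Sᶜ).Adj u w ↔ q u ≠ q w := fun u w => by
    rw [SimpleGraph.induce_adj, h.adj_iff, ← hq, ← hq, Fin.succAbove_right_injective.ne_iff]
  have hsurj : Function.Surjective q := fun j => by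
    obtain ⟨v, hv⟩ := h.surj (i.succAbove j)
    have hvS : v ∈ Sᶜ := by simp [S, hv]
    exact ⟨⟨v, hvS⟩, Fin.succAbove_right_injective (by rw [hq, hv])⟩
  have hcardS : Fintype.card ↥Sᶜ = Fintype.card V - #(part p i) := by
    simp only [Fintype.card_subtype, Set.mem_compl_iff, Set.mem_ofPred_eq, S, part]
    exact eq_tsub_of_add_eq (by rw [add_comm, card_filter_add_card_filter_not, card_univ])
  have hlt : Fintype.card ↥Sᶜ < Fintype.card V := by
    obtain ⟨v, hv⟩ := h.surj i
    exact Fintype.card_subtype_lt (x := v) (by simp [S, hv])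
  refine h.bad (listColorable_of_induce_compl (S := S) (c := c) ?_ (fun v hv => hc v hv) ?_)
  · intro u hu w hw _ huw
    exact (h.adj_iff u w).mp huw (hu.trans hw.symm)
  refine h.choosable_of_card_lt hsurj hadj hlt (hcardS ▸ hcard) _ fun w => ?_
  have := h.lists w.1
  have := pred_card_le_card_erase (s := L w.1) (a := c)
  omega

lemma two_le_card_part {m : ℕ} {p : V → Fin (m + 1)} (h : MinCex V G (m + 1) p L)
    (hV : Fintype.card V ≤ 2 * (m + 1)) (i : Fin (m + 1)) : 2 ≤ #(part p i) := by
  obtain ⟨v, rfl⟩ := h.surj i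
  have hv : v ∈ part p (p v) := mem_part.mpr rfl
  by_contra! hlt
  have hone : part p (p v) = {v} :=
    eq_singleton_iff_unique_mem.mpr ⟨hv, fun w hw => card_le_one.mp (by omega) w hw v hv⟩
  obtain ⟨c, hc⟩ := card_pos.mp ((Nat.succ_pos m).trans_le (h.lists v))
  refine h.false_of_forall_mem_part (c := c) (fun w hw => ?_) (by rw [hone, card_singleton]; omega)
  have hw' : w ∈ part p (p v) := mem_part.mpr hw
  rw [hone, mem_singleton] at hw'
  exact hw' ▸ hc

lemma disjoint_lists {m : ℕ} {p : V → Fin (m + 1)} (h : MinCex V G (m + 1) p L)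
    (htwo : ∀ i, #(part p i) = 2) (hV : Fintype.card V ≤ 2 * (m + 1)) (u w : V) (huw : u ≠ w)
    (hpuw : p u = p w) : Disjoint (L u) (L w) := by
  refine disjoint_left.mpr fun c hcu hcw => ?_
  have hsub : {u, w} ⊆ part p (p u) := by
    simp [insert_subset_iff, hpuw]
  have hpart : part p (p u) = {u, w} :=
    (eq_of_subset_of_card_le hsub (by rw [htwo, card_pair huw])).symm
  refine h.false_of_forall_mem_part (i := p u) (c := c) (fun v hv => ?_) (by rw [htwo]; omega)
  have hv' : v ∈ part p (p u) := mem_part.mpr hv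
  rw [hpart, mem_insert, mem_singleton] at hv'
  obtain rfl | rfl := hv'
  · exact hcu
  · exact hcw

end MinCex

/-- A minimal counterexample has exactly `2k+1` vertices. -/
theorem stmt_7 (V : Type) [Fintype V] (G : SimpleGraph V) (k : ℕ) (p : V → Fin k)
    (L : V → Finset ℕ) (h : MinCex V G k p L) :
    Fintype.card V = 2 * k + 1 := by
  by_contra hne
  have hV : Fintype.card V ≤ 2 * k := by have := h.card_le; omega
  obtain ⟨m, rfl⟩ := Nat.exists_eq_add_one.mpr h.pos
  have htwo := card_part_eq_two (h.two_le_card_part hV) hV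
  exact h.bad (listColorable_of_disjoint_lists G p hV h.lists (h.disjoint_lists htwo hV))
end
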